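/- Let X_n be the Class DIII Wigner-type ensemble, let m ≥ 3, let g = γ^ν be a cyclic shift of [m], and let P = (P_{i,l}) be a multi-index in S_n^{good}(π̂_g) such that for every l ∈ [m] the 2×2 matrix [[p_{1,l}, q_{1,l}],[p_{2,g(l)}, q_{2,g(l)}]] equals nΔ_l + A(a_l,b_l) for some Δ-matrix Δ_l and some a_l ≠ b_l in [n]. If P_{1,l} ≠ P_{2,g(l)} for some l ∈ [m], then P_{1,l} ≠ P_{2,g(l)} for all l ∈ [m]; moreover the number of l ∈ [m] for which Δ_l is a step is even, and ∏_{l=1}^m E[a_n(P_{1,l})·a_n(P_{2,g(l)})] = σ^{2m}. -/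

import Mathlib

open MeasureTheory ProbabilityTheory Matrix Filter

noncomputable section

/-- `blk d a` is index `a` in the first block row/column if `d = 0`, and in the
second block row/column otherwise (encoding `n·d + a` in `[2n]`). -/
def blk {n : ℕ} (d : ℕ) (a : Fin n) : Fin n ⊕ Fin n :=
  if d = 0 then Sum.inl a else Sum.inr a

/-- A Δ-matrix: a `2 × 2` matrix with entries in `{0,1}` whose entries sum to an
even number. -/
def IsDelta (D : Matrix (Fin 2) (Fin 2) ℕ) : Prop :=
  (∀ i j, D i j ≤ 1) ∧ Even (D 0 0 + D 0 1 + D 1 0 + D 1 1)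

/-- The (unnormalized) class DIII block matrix built from `X₁, X₂`; its `(p,q)` entry
is `a_n(p,q)`, the `(p,q)` entry of `√(2n)·X_n`. -/
def dIIIBlock {n : ℕ} (X₁ X₂ : Matrix (Fin n) (Fin n) ℂ) :
    Matrix (Fin n ⊕ Fin n) (Fin n ⊕ Fin n) ℂ :=
  Matrix.fromBlocks X₁ X₂ X₂ (-X₁)

/-- The space `M_n^{DIII}`: block matrices `[[X₁,X₂],[X₂,−X₁]]` with `X₁, X₂`
skew-symmetric with purely imaginary entries. `[2n]` is encoded as `Fin n ⊕ Fin n`. -/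
def MDIII (n : ℕ) : Set (Matrix (Fin n ⊕ Fin n) (Fin n ⊕ Fin n) ℂ) :=
  {M | ∃ X₁ X₂ : Matrix (Fin n) (Fin n) ℂ,
    (∀ a b, (X₁ a b).re = 0) ∧ (∀ a b, (X₂ a b).re = 0) ∧
    X₁ᵀ = -X₁ ∧ X₂ᵀ = -X₂ ∧ M = Matrix.fromBlocks X₁ X₂ X₂ (-X₁)}

/-- The coordinate functional `X ↦ X_{p,q}` on `M_n^{DIII}` is nonzero. -/
def NonzeroAtDIII (n : ℕ) (P : (Fin n ⊕ Fin n) × (Fin n ⊕ Fin n)) : Prop :=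
  ∃ M ∈ MDIII n, M P.1 P.2 ≠ 0

/-- `(p,q) ∼ (r,s)`: both coordinate functionals on `M_n^{DIII}` are nonzero and
equal up to sign. -/
def simDIII (n : ℕ) (P Q : (Fin n ⊕ Fin n) × (Fin n ⊕ Fin n)) : Prop :=
  NonzeroAtDIII n P ∧ NonzeroAtDIII n Q ∧
    ((∀ M ∈ MDIII n, M Q.1 Q.2 = M P.1 P.2) ∨
      (∀ M ∈ MDIII n, M Q.1 Q.2 = -(M P.1 P.2)))

/-- A multi-index `P = (P_{i,l}) = ((p_{i,l},q_{i,l}))` is consistent if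
`q_{i,l} = p_{i,l+1}` cyclically, for `i = 1, 2`. -/
def IsConsistent {n m : ℕ} [NeZero m]
    (P : Fin 2 → Fin m → ((Fin n ⊕ Fin n) × (Fin n ⊕ Fin n))) : Prop :=
  ∀ i l, (P i l).2 = (P i (l + 1)).1

/-- `P ∈ S_n^{good}(π̂_g)`: `P` is a consistent multi-index, every `P_{i,l}` lies in
the domain of `∼`, and the `∼`-relations among the `2m` index pairs are exactly those
given by the pair partition `π̂_g = {{(1,l),(2,g(l))} : l ∈ [m]}`. -/
def SGoodDIII (n m : ℕ) [NeZero m] (g : Fin m → Fin m)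
    (P : Fin 2 → Fin m → ((Fin n ⊕ Fin n) × (Fin n ⊕ Fin n))) : Prop :=
  IsConsistent P ∧ (∀ i l, NonzeroAtDIII n (P i l)) ∧
    ∀ i l i' l', simDIII n (P i l) (P i' l') ↔
      ((i = i' ∧ l = l') ∨ (i = 0 ∧ i' = 1 ∧ l' = g l) ∨ (i = 1 ∧ i' = 0 ∧ l = g l'))

/-!
Consistency of `P` makes the first column of `Δ_{l+1}` equal to the second column of `Δ_l`,
and a Δ-matrix has non-constant first column iff it has non-constant second column. Since
`P_{1,l} ≠ P_{2,g(l)}` means exactly that the first column of `Δ_l` is non-constant, this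
property travels around the cycle. The `l`-th factor is then `E[X₂(a_l,b_l)²] = -σ²` if `Δ_l`
is a step and `-E[X₁(a_l,b_l)²] = σ²` otherwise, and the steps are the sign changes of the
cyclic `0/1`-sequence `l ↦ Δ_l(0,0)`, of which there is an even number.
-/

open Finset

theorem blk_eq_blk_iff {n d d' : ℕ} (hd : d ≤ 1) (hd' : d' ≤ 1) {u u' : Fin n} :
    blk d u = blk d' u' ↔ d = d' ∧ u = u' := by
  unfold blk
  interval_cases d <;> interval_cases d' <;> simp

namespace IsDelta

variable {D : Matrix (Fin 2) (Fin 2) ℕ}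

theorem col_ne_iff (hD : IsDelta D) : D 0 0 ≠ D 1 0 ↔ D 0 1 ≠ D 1 1 := by
  obtain ⟨hle, hpar⟩ := hD
  have := hle 0 0; have := hle 0 1; have := hle 1 0; have := hle 1 1
  rw [Nat.even_iff] at hpar
  omega

theorem row_ne_iff (hD : IsDelta D) : D 0 0 ≠ D 0 1 ↔ D 1 0 ≠ D 1 1 := by
  obtain ⟨hle, hpar⟩ := hD
  have := hle 0 0; have := hle 0 1; have := hle 1 0; have := hle 1 1
  rw [Nat.even_iff] at hpar
  omega

end IsDelta

theorem Fin.forall_of_apply_add_one {m : ℕ} [NeZero m] {p : Fin m → Prop}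
    (hp : ∀ l, p l → p (l + 1)) {i : Fin m} (hi : p i) (j : Fin m) : p j := by
  open Fin.NatCast in
  have hshift : ∀ k : ℕ, p (i + k) := by
    intro k
    induction k with
    | zero => simpa using hi
    | succ k ih => simpa [add_assoc] using hp _ ih
  simpa using hshift (j - i).val

theorem even_card_filter_ne_apply_add_one {m : ℕ} [NeZero m] (f : Fin m → ℕ)
    (hf : ∀ l, f l ≤ 1) : Even #{l | f l ≠ f (l + 1)} := by
  -- modulo 2 the indicator of a change is `f (l + 1) - f l`, which telescopes around the cycle
  have hterm : ∀ l, ((if f l ≠ f (l + 1) then 1 else 0 : ℕ) : ZMod 2) = f (l + 1) - f l := by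
    intro l
    obtain h | h : f l = 0 ∨ f l = 1 := by have := hf l; omega
    all_goals obtain h' | h' : f (l + 1) = 0 ∨ f (l + 1) = 1 := by have := hf (l + 1); omega
    all_goals simp [h, h']
  rw [← ZMod.natCast_eq_zero_iff_even, card_filter, Nat.cast_sum]
  simp only [hterm]
  rw [sum_sub_distrib, Fintype.sum_equiv (Equiv.addRight 1) (fun l => (f (l + 1) : ZMod 2))
    (fun l => (f l : ZMod 2)) fun _ => rfl, sub_self]

theorem prod_ite_neg_eq_pow {ι R : Type*} [Fintype ι] [CommMonoid R] [HasDistribNeg R]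
    (p : ι → Prop) [DecidablePred p] (c : R) (hp : Even #{i | p i}) :
    ∏ i, (if p i then -c else c) = c ^ Fintype.card ι := by
  rw [prod_ite, prod_const, prod_const, neg_pow, hp.neg_one_pow, one_mul, ← pow_add,
    card_filter_add_card_filter_not, card_univ]

theorem integral_sq_of_re_eq_zero {Ω : Type*} [MeasurableSpace Ω] {μ : Measure Ω}
    {Y : Ω → ℂ} (hY : ∀ ω, (Y ω).re = 0) :
    ∫ ω, Y ω ^ 2 ∂μ = -((∫ ω, ‖Y ω‖ ^ 2 ∂μ : ℝ) : ℂ) := by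
  have hsq : ∀ ω, Y ω ^ 2 = -((‖Y ω‖ ^ 2 : ℝ) : ℂ) := fun ω => by
    rw [Complex.sq_norm]
    apply Complex.ext <;> simp [pow_two, Complex.normSq_apply, hY ω]
  simp only [hsq]
  rw [integral_neg, integral_complex_ofReal]

theorem dIIIBlock_blk_mul_blk {n : ℕ} (X₁ X₂ : Matrix (Fin n) (Fin n) ℂ)
    {D : Matrix (Fin 2) (Fin 2) ℕ} (hD : IsDelta D) (hcol : D 0 0 ≠ D 1 0) (u v : Fin n) :
    dIIIBlock X₁ X₂ (blk (D 0 0) u) (blk (D 0 1) v) *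
        dIIIBlock X₁ X₂ (blk (D 1 0) u) (blk (D 1 1) v) =
      if D 0 0 ≠ D 0 1 then X₂ u v ^ 2 else -(X₁ u v ^ 2) := by
  have hcol' := hD.col_ne_iff.mp hcol
  have hle := hD.1
  have := hle 0 0; have := hle 0 1; have := hle 1 0; have := hle 1 1
  obtain h00 | h00 : D 0 0 = 0 ∨ D 0 0 = 1 := by omega
  all_goals obtain h01 | h01 : D 0 1 = 0 ∨ D 0 1 = 1 := by omega
  all_goals
    obtain ⟨h10, h11⟩ : D 1 0 = 1 - D 0 0 ∧ D 1 1 = 1 - D 0 1 := by omega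
    simp [h00, h01, h10, h11, dIIIBlock, blk, pow_two]

theorem integral_dIIIBlock_blk_mul_blk {Ω : Type*} [MeasurableSpace Ω] {μ : Measure Ω} {n : ℕ}
    (X₁ X₂ : Ω → Matrix (Fin n) (Fin n) ℂ) {D : Matrix (Fin 2) (Fin 2) ℕ} (hD : IsDelta D)
    (hcol : D 0 0 ≠ D 1 0) {u v : Fin n} {σ : ℝ} (hre₁ : ∀ ω, (X₁ ω u v).re = 0)
    (hre₂ : ∀ ω, (X₂ ω u v).re = 0) (hvar₁ : ∫ ω, ‖X₁ ω u v‖ ^ 2 ∂μ = σ ^ 2)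
    (hvar₂ : ∫ ω, ‖X₂ ω u v‖ ^ 2 ∂μ = σ ^ 2) :
    ∫ ω, dIIIBlock (X₁ ω) (X₂ ω) (blk (D 0 0) u) (blk (D 0 1) v) *
        dIIIBlock (X₁ ω) (X₂ ω) (blk (D 1 0) u) (blk (D 1 1) v) ∂μ =
      if D 0 0 ≠ D 0 1 then -(σ : ℂ) ^ 2 else (σ : ℂ) ^ 2 := by
  simp only [dIIIBlock_blk_mul_blk _ _ hD hcol]
  split_ifs
  · rw [integral_sq_of_re_eq_zero hre₂, hvar₂]
    push_cast; ring
  · rw [integral_neg, integral_sq_of_re_eq_zero hre₁, hvar₁]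
    push_cast; ring

theorem IsConsistent.delta_add_one_col_zero_eq_col_one {n m : ℕ} [NeZero m]
    {P : Fin 2 → Fin m → (Fin n ⊕ Fin n) × (Fin n ⊕ Fin n)} (hcons : IsConsistent P)
    {g : Fin m → Fin m} (hg : ∀ l, g (l + 1) = g l + 1)
    {Δ : Fin m → Matrix (Fin 2) (Fin 2) ℕ} (hΔ : ∀ l, IsDelta (Δ l)) {a b : Fin m → Fin n}
    (hinst : ∀ l, P 0 l = (blk (Δ l 0 0) (a l), blk (Δ l 0 1) (b l)) ∧
      P 1 (g l) = (blk (Δ l 1 0) (a l), blk (Δ l 1 1) (b l))) (l : Fin m) :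
    Δ (l + 1) 0 0 = Δ l 0 1 ∧ Δ (l + 1) 1 0 = Δ l 1 1 := by
  have h₀ := hcons 0 l
  have h₁ := hcons 1 (g l)
  rw [(hinst l).1, (hinst (l + 1)).1] at h₀
  rw [← hg, (hinst l).2, (hinst (l + 1)).2] at h₁
  exact ⟨((blk_eq_blk_iff ((hΔ l).1 0 1) ((hΔ (l + 1)).1 0 0)).mp h₀).1.symm,
    ((blk_eq_blk_iff ((hΔ l).1 1 1) ((hΔ (l + 1)).1 1 0)).mp h₁).1.symm⟩

theorem stmt8_general
    {Ω : Type*} [MeasurableSpace Ω] (μ : Measure Ω)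
    (σ : ℝ)
    (X : (n : ℕ) → Fin 2 → Ω → Matrix (Fin n) (Fin n) ℂ)
    (him : ∀ n i ω a b, (X n i ω a b).re = 0)
    (hvar : ∀ n i (a b : Fin n), a ≠ b → ∫ ω, ‖X n i ω a b‖ ^ 2 ∂μ = σ ^ 2)
    (m : ℕ) [NeZero m] (ν : ℕ) (hν : ν < m)
    (g : Fin m → Fin m) (hg : g = fun l => l + ⟨ν, hν⟩)
    (n : ℕ) (P : Fin 2 → Fin m → ((Fin n ⊕ Fin n) × (Fin n ⊕ Fin n)))
    (hP : SGoodDIII n m g P)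
    (Δ : Fin m → Matrix (Fin 2) (Fin 2) ℕ) (hΔ : ∀ l, IsDelta (Δ l))
    (a b : Fin m → Fin n) (hab : ∀ l, a l ≠ b l)
    -- `[[p_{1,l}, q_{1,l}],[p_{2,g(l)}, q_{2,g(l)}]] = nΔ_l + A(a_l, b_l)`
    (hinst : ∀ l, P 0 l = (blk (Δ l 0 0) (a l), blk (Δ l 0 1) (b l)) ∧
      P 1 (g l) = (blk (Δ l 1 0) (a l), blk (Δ l 1 1) (b l)))
    (hex : ∃ l, P 0 l ≠ P 1 (g l)) :
    (∀ l, P 0 l ≠ P 1 (g l)) ∧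
    -- the number of `l` for which `Δ_l` is a step is even
    Even (Set.ncard {l : Fin m | Δ l 0 0 ≠ Δ l 0 1 ∧ Δ l 1 0 ≠ Δ l 1 1}) ∧
    ∏ l : Fin m, ∫ ω, dIIIBlock (X n 0 ω) (X n 1 ω) (P 0 l).1 (P 0 l).2 *
        dIIIBlock (X n 0 ω) (X n 1 ω) (P 1 (g l)).1 (P 1 (g l)).2 ∂μ
      = (σ : ℂ) ^ (2 * m) := by
  have hg₁ : ∀ l, g (l + 1) = g l + 1 := fun l => by rw [hg]; exact (add_right_comm l _ 1).symm
  have hnext := hP.1.delta_add_one_col_zero_eq_col_one hg₁ hΔ hinst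
  have hsep : ∀ l, P 0 l ≠ P 1 (g l) ↔ Δ l 0 0 ≠ Δ l 1 0 := fun l => by
    rw [(hinst l).1, (hinst l).2, Ne, Prod.mk.injEq, blk_eq_blk_iff ((hΔ l).1 0 0) ((hΔ l).1 1 0),
      blk_eq_blk_iff ((hΔ l).1 0 1) ((hΔ l).1 1 1)]
    have := (hΔ l).col_ne_iff
    tauto
  have hcol : ∀ l, Δ l 0 0 ≠ Δ l 1 0 := by
    obtain ⟨l₀, hl₀⟩ := hex
    refine Fin.forall_of_apply_add_one (fun l hl => ?_) ((hsep l₀).mp hl₀)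
    rw [(hnext l).1, (hnext l).2]
    exact (hΔ l).col_ne_iff.mp hl
  have heven : Even #{l | Δ l 0 0 ≠ Δ l 0 1} := by
    simpa only [(hnext _).1] using even_card_filter_ne_apply_add_one (Δ · 0 0) (hΔ · |>.1 0 0)
  refine ⟨fun l => (hsep l).mpr (hcol l), ?_, ?_⟩
  · have hsteps : {l | Δ l 0 0 ≠ Δ l 0 1 ∧ Δ l 1 0 ≠ Δ l 1 1} =
        (({l | Δ l 0 0 ≠ Δ l 0 1} : Finset (Fin m)) : Set (Fin m)) := by
      ext l
      simp [← (hΔ l).row_ne_iff]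
    rw [hsteps, Set.ncard_coe_finset]
    exact heven
  · conv_rhs => rw [pow_mul, ← Fintype.card_fin m, ← prod_ite_neg_eq_pow _ _ heven]
    refine Fintype.prod_congr _ _ fun l => ?_
    rw [(hinst l).1, (hinst l).2]
    exact integral_dIIIBlock_blk_mul_blk _ _ (hΔ l) (hcol l) (him n 0 · _ _) (him n 1 · _ _)
      (hvar n 0 _ _ (hab l)) (hvar n 1 _ _ (hab l))

theorem stmt8
    {Ω : Type*} [MeasurableSpace Ω] (μ : Measure Ω) [IsProbabilityMeasure μ]
    (σ : ℝ) (hσ : 0 < σ)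
    (X : (n : ℕ) → Fin 2 → Ω → Matrix (Fin n) (Fin n) ℂ)
    (hmeas : ∀ n i a b, Measurable fun ω => X n i ω a b)
    (him : ∀ n i ω a b, (X n i ω a b).re = 0)
    (hskew : ∀ n i ω a b, X n i ω b a = - X n i ω a b)
    (hindep : ∀ n, iIndepFun
      (fun (v : {v : Fin 2 × Fin n × Fin n // v.2.1 < v.2.2}) ω =>
        X n v.1.1 ω v.1.2.1 v.1.2.2) μ)
    (hcent : ∀ n i a b, ∫ ω, X n i ω a b ∂μ = 0)
    (hvar : ∀ n i (a b : Fin n), a ≠ b → ∫ ω, ‖X n i ω a b‖ ^ 2 ∂μ = σ ^ 2)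
    (hmom : ∀ k : ℕ, ∃ C : ℝ, ∀ n i (a b : Fin n),
      ∫ ω, ‖X n i ω a b‖ ^ k ∂μ ≤ C)
    (m : ℕ) [NeZero m] (hm : 3 ≤ m) (ν : ℕ) (hν : ν < m)
    (g : Fin m → Fin m) (hg : g = fun l => l + ⟨ν, hν⟩)
    (n : ℕ) (P : Fin 2 → Fin m → ((Fin n ⊕ Fin n) × (Fin n ⊕ Fin n)))
    (hP : SGoodDIII n m g P)
    (Δ : Fin m → Matrix (Fin 2) (Fin 2) ℕ) (hΔ : ∀ l, IsDelta (Δ l))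
    (a b : Fin m → Fin n) (hab : ∀ l, a l ≠ b l)
    -- `[[p_{1,l}, q_{1,l}],[p_{2,g(l)}, q_{2,g(l)}]] = nΔ_l + A(a_l, b_l)`
    (hinst : ∀ l, P 0 l = (blk (Δ l 0 0) (a l), blk (Δ l 0 1) (b l)) ∧
      P 1 (g l) = (blk (Δ l 1 0) (a l), blk (Δ l 1 1) (b l)))
    (hex : ∃ l, P 0 l ≠ P 1 (g l)) :
    (∀ l, P 0 l ≠ P 1 (g l)) ∧
    -- the number of `l` for which `Δ_l` is a step is even
    Even (Set.ncard {l : Fin m | Δ l 0 0 ≠ Δ l 0 1 ∧ Δ l 1 0 ≠ Δ l 1 1}) ∧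
    ∏ l : Fin m, ∫ ω, dIIIBlock (X n 0 ω) (X n 1 ω) (P 0 l).1 (P 0 l).2 *
        dIIIBlock (X n 0 ω) (X n 1 ω) (P 1 (g l)).1 (P 1 (g l)).2 ∂μ
      = (σ : ℂ) ^ (2 * m) :=
  stmt8_general μ σ X him hvar m ν hν g hg n P hP Δ hΔ a b hab hinst hex
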